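/- arXiv:1906.02911 — 2 statements merged into one kernel-verified Lean document; each statement's English description precedes it below -/
import Mathlib

section
/- Let d ≥ 1, let φ_1,…,φ_d be pairwise distinct real numbers, let p_1,…,p_d > 0 with ∑_i p_i = 1, and let q > 0. Then the d×d matrix M with entries M_{ij} = q p_j for i ≠ j and M_{ii} = q p_i − q + φ_i has exactly d distinct real eigenvalues: writing the values φ_i − q in increasing order as c_1 < … < c_d, there is exactly one eigenvalue in each open interval (c_i, c_{i+1}) for i = 1,…,d−1, exactly one eigenvalue in (c_d, ∞), and no other eigenvalues (in particular none in (−∞, c_1] and none equal to any c_i). -/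
/-!
After sorting the poles `c₁ < ⋯ < c_d` by the permutation `e`, `M - θ I` is conjugate to
`diag(c - θ) + q 𝟙 wᵀ`, whose determinant is `∏ᵢ (cᵢ - θ) + q ∑ⱼ wⱼ ∏_{i ≠ j} (cᵢ - θ)`.
At `θ = c_k` only the `k`-th summand survives, which has sign `(-1)^k`; for `θ > max cᵢ + q`,
using `∑ w = 1`, the determinant has sign `(-1)^d`. The intermediate value theorem therefore gives
a root in each of the `d` disjoint intervals `(c_k, c_{k+1})` and `(c_d, ∞)`, and as the
characteristic polynomial has degree `d` there are no other roots.
-/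

open Finset Set Matrix Function

theorem existsUnique_of_pairwise_disjoint_of_card_le {α ι : Type*} [Fintype ι] {P : α → Prop}
    {Z : Finset α} (hZ : ∀ x, P x → x ∈ Z) (hcard : #Z ≤ Fintype.card ι) {I : ι → Set α}
    (hI : Pairwise (Disjoint on I)) (hex : ∀ k, ∃ x ∈ I k, P x) :
    (∀ k, ∃! x, x ∈ I k ∧ P x) ∧ ∀ x, P x → ∃ k, x ∈ I k := by
  classical
  choose r hrI hrP using hex
  have hr : Injective r := fun k m hkm => by
    by_contra hne
    exact Set.disjoint_left.mp (hI hne) (hrI k) (hkm ▸ hrI m)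
  have himage : Finset.univ.image r = Z := eq_of_subset_of_card_le
    (fun x hx => by obtain ⟨k, -, rfl⟩ := mem_image.mp hx; exact hZ _ (hrP k))
    (by rw [card_image_of_injective _ hr, card_univ]; exact hcard)
  have hsurj : ∀ x, P x → ∃ k, r k = x := fun x hx => by
    obtain ⟨k, -, hk⟩ := mem_image.mp (himage ▸ hZ x hx)
    exact ⟨k, hk⟩
  refine ⟨fun k => ⟨r k, ⟨hrI k, hrP k⟩, fun x ⟨hxI, hxP⟩ => ?_⟩, fun x hx => ?_⟩
  · obtain ⟨m, rfl⟩ := hsurj x hxP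
    obtain rfl : m = k := by
      by_contra hne
      exact Set.disjoint_left.mp (hI hne) (hrI m) hxI
    rfl
  · obtain ⟨k, rfl⟩ := hsurj x hx
    exact ⟨k, hrI k⟩

theorem exists_mem_Ioo_eq_zero_of_alternating_sign {f : ℝ → ℝ} (hf : Continuous f) {a b : ℝ}
    (hab : a < b) (m : ℕ) (ha : 0 < (-1) ^ m * f a) (hb : 0 < (-1) ^ (m + 1) * f b) :
    ∃ x ∈ Set.Ioo a b, f x = 0 := by
  rw [pow_succ, mul_neg_one, neg_mul] at hb
  obtain ⟨x, hx, hfx⟩ := intermediate_value_Ioo' hab.le (continuous_const.mul hf).continuousOn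
    (show (0 : ℝ) ∈ Set.Ioo ((-1) ^ m * f b) ((-1) ^ m * f a) from ⟨by linarith, ha⟩)
  exact ⟨x, hx, (mul_eq_zero.mp hfx).resolve_left (pow_ne_zero _ (by norm_num))⟩

/-- `(c k, c (k + 1))`, and `(c k, ∞)` for the last index `k`. -/
def interlacingInterval {d : ℕ} (c : Fin d → ℝ) (k : Fin d) : Set ℝ :=
  {θ | c k < θ ∧ ∀ h : (k : ℕ) + 1 < d, θ < c ⟨k + 1, h⟩}

section InterlacingInterval

variable {d : ℕ} {c : Fin d → ℝ}

theorem interlacingInterval_of_lt {k : Fin d} (h : (k : ℕ) + 1 < d) :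
    interlacingInterval c k = Set.Ioo (c k) (c ⟨k + 1, h⟩) :=
  Set.ext fun _ => and_congr_right fun _ => ⟨fun H => H h, fun H _ => H⟩

theorem interlacingInterval_of_le {k : Fin d} (h : d ≤ (k : ℕ) + 1) :
    interlacingInterval c k = Set.Ioi (c k) :=
  Set.ext fun _ => and_iff_left fun h' => absurd h' (not_lt.mpr h)

theorem pairwise_disjoint_interlacingInterval (hc : Monotone c) :
    Pairwise (Disjoint on interlacingInterval c) := by
  refine (pairwise_disjoint_on _).mpr fun k m hkm => Set.disjoint_left.mpr ?_
  rintro θ ⟨-, hθk⟩ ⟨hθm, -⟩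
  have hk : (k : ℕ) + 1 < d := by omega
  exact (hθk hk).not_ge ((hc (show (⟨k + 1, hk⟩ : Fin d) ≤ m from hkm)).trans hθm.le)

end InterlacingInterval

namespace Matrix

section Field

variable {K n : Type*} [Field K] [Fintype n] [DecidableEq n]

theorem det_diagonal_add_replicateCol_mul_replicateRow_of_ne_zero {a : n → K} (ha : ∀ i, a i ≠ 0)
    (u v : n → K) :
    (diagonal a + replicateCol Unit u * replicateRow Unit v).det =
      ∏ i, a i + ∑ j, u j * v j * ∏ i ∈ univ.erase j, a i := by
  have hfactor : diagonal a + replicateCol Unit u * replicateRow Unit v =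
      diagonal a * (1 + replicateCol Unit (fun i => u i / a i) * replicateRow Unit v) := by
    have hcol : diagonal a * replicateCol Unit (fun i => u i / a i) = replicateCol Unit u := by
      ext i
      simp only [diagonal_mul, replicateCol_apply]
      exact mul_div_cancel₀ _ (ha i)
    rw [Matrix.mul_add, Matrix.mul_one, ← Matrix.mul_assoc, hcol]
  rw [hfactor, det_mul, det_diagonal, det_one_add_replicateCol_mul_replicateRow, mul_add, mul_one,
    dotProduct, mul_sum]
  congr 1
  refine sum_congr rfl fun j _ => ?_
  rw [← mul_prod_erase univ a (mem_univ j)]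
  field_simp [ha j]

theorem neg_one_pow_card_mul_det_sub_smul_one (M : Matrix n n K) (θ : K) :
    (-1) ^ Fintype.card n * (M - θ • 1).det = (θ • 1 - M).det := by
  rw [← det_neg, neg_sub]

theorem det_sub_smul_one_eq_zero_iff (M : Matrix n n K) (θ : K) :
    (M - θ • 1).det = 0 ↔ θ ∈ M.charpoly.roots := by
  rw [Polynomial.mem_roots M.charpoly_monic.ne_zero, Polynomial.IsRoot, eval_charpoly,
    scalar_apply, ← smul_one_eq_diagonal, ← neg_one_pow_card_mul_det_sub_smul_one]
  simp

end Field

section DiagAddRankOne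

variable {n : Type*} [DecidableEq n]

def diagAddRankOne (q : ℝ) (c w : n → ℝ) : Matrix n n ℝ :=
  diagonal c + replicateCol Unit (fun _ => q) * replicateRow Unit w

variable (q : ℝ) (c w : n → ℝ)

@[simp]
theorem diagAddRankOne_apply (i j : n) : diagAddRankOne q c w i j = diagonal c i j + q * w j := by
  simp [diagAddRankOne, Matrix.mul_apply]

theorem submatrix_equiv_eq_diagAddRankOne {m : Type*} [DecidableEq m] (φ p : n → ℝ)
    (e : m ≃ n) :
    (of fun i j : n => if i = j then q * p i - q + φ i else q * p j).submatrix e e =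
      diagAddRankOne q (fun i => φ (e i) - q) (fun i => p (e i)) := by
  ext i j
  by_cases hij : i = j
  · subst hij
    simp only [submatrix_apply, of_apply, ↓reduceIte, diagAddRankOne_apply, diagonal_apply_eq]
    ring
  · simp [hij, e.injective.ne hij]

variable [Fintype n]

theorem det_diagonal_add_replicateCol_mul_replicateRow (a u v : n → ℝ) :
    (diagonal a + replicateCol Unit u * replicateRow Unit v).det =
      ∏ i, a i + ∑ j, u j * v j * ∏ i ∈ univ.erase j, a i := by
  suffices h : (fun t : ℝ =>
      (diagonal (fun i => a i - t) + replicateCol Unit u * replicateRow Unit v).det) =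
      fun t => ∏ i, (a i - t) + ∑ j, u j * v j * ∏ i ∈ univ.erase j, (a i - t) by
    simpa using congrFun h 0
  refine Continuous.ext_on ((Set.finite_range a).countable.dense_compl ℝ) (by fun_prop)
    (by fun_prop) fun t ht =>
      det_diagonal_add_replicateCol_mul_replicateRow_of_ne_zero (fun i => ?_) u v
  exact sub_ne_zero.mpr fun h => ht ⟨i, h⟩

theorem det_diagAddRankOne_sub_smul_one (θ : ℝ) :
    (diagAddRankOne q c w - θ • 1).det =
      ∏ i, (c i - θ) + q * ∑ j, w j * ∏ i ∈ univ.erase j, (c i - θ) := by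
  rw [diagAddRankOne, smul_one_eq_diagonal, add_sub_right_comm, diagonal_sub,
    det_diagonal_add_replicateCol_mul_replicateRow, mul_sum]
  simp only [mul_assoc]

theorem det_smul_one_sub_diagAddRankOne (θ : ℝ) :
    (θ • 1 - diagAddRankOne q c w).det =
      ∏ i, (θ - c i) - q * ∑ j, w j * ∏ i ∈ univ.erase j, (θ - c i) := by
  have : θ • 1 - diagAddRankOne q c w =
      diagonal (fun i => θ - c i) + replicateCol Unit (fun _ => -q) * replicateRow Unit w := by
    rw [diagAddRankOne, smul_one_eq_diagonal, sub_add_eq_sub_sub, diagonal_sub, sub_eq_add_neg,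
      ← Matrix.neg_mul]
    rfl
  rw [this, det_diagonal_add_replicateCol_mul_replicateRow, mul_sum, sub_eq_add_neg,
    ← sum_neg_distrib]
  simp only [neg_mul, mul_assoc]

theorem det_diagAddRankOne_sub_smul_one_self (k : n) :
    (diagAddRankOne q c w - c k • 1).det = q * w k * ∏ i ∈ univ.erase k, (c i - c k) := by
  rw [det_diagAddRankOne_sub_smul_one, prod_eq_zero (mem_univ k) (sub_self _), zero_add,
    sum_eq_single k (fun j _ hjk => ?_) (by simp), mul_assoc]
  rw [prod_eq_zero (mem_erase.mpr ⟨Ne.symm hjk, mem_univ k⟩) (sub_self _), mul_zero]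

variable {q c w}

theorem det_smul_one_sub_diagAddRankOne_pos [Nonempty n] (hq : 0 < q) (hw : ∀ i, 0 < w i)
    (hsum : ∑ i, w i = 1) {θ : ℝ} (hθ : ∀ i, c i + q < θ) :
    0 < (θ • 1 - diagAddRankOne q c w).det := by
  have hexpand : ∏ i, (θ - c i) = ∑ j, w j * ((θ - c j) * ∏ i ∈ univ.erase j, (θ - c i)) := by
    simp_rw [mul_prod_erase univ (fun i => θ - c i) (mem_univ _), ← sum_mul, hsum, one_mul]
  rw [det_smul_one_sub_diagAddRankOne, hexpand, mul_sum, ← sum_sub_distrib]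
  refine sum_pos (fun j _ => ?_) univ_nonempty
  have hprod : 0 < ∏ i ∈ univ.erase j, (θ - c i) :=
    prod_pos fun i _ => by linarith [hθ i]
  have hj : 0 < θ - c j - q := by linarith [hθ j]
  calc 0 < w j * (θ - c j - q) * ∏ i ∈ univ.erase j, (θ - c i) :=
        mul_pos (mul_pos (hw j) hj) hprod
    _ = _ := by ring

end DiagAddRankOne

section Interlacing

variable {d : ℕ} {q : ℝ} {c w : Fin d → ℝ}

theorem neg_one_pow_mul_det_diagAddRankOne_sub_smul_one_self_pos (hq : 0 < q) (hw : ∀ i, 0 < w i)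
    (hc : StrictMono c) (k : Fin d) :
    0 < (-1) ^ (k : ℕ) * (diagAddRankOne q c w - c k • 1).det := by
  have hsplit : univ.erase k = Finset.Iio k ∪ Finset.Ioi k := by
    ext i
    simp only [Finset.mem_erase, Finset.mem_univ, and_true, Finset.mem_union, Finset.mem_Iio,
      Finset.mem_Ioi]
    exact ne_iff_lt_or_gt
  have hbelow :
      ∏ i ∈ Finset.Iio k, (c i - c k) = (-1) ^ (k : ℕ) * ∏ i ∈ Finset.Iio k, (c k - c i) := by
    rw [← Fin.card_Iio, ← prod_neg]
    simp_rw [neg_sub]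
  have hdisj : Disjoint (Finset.Iio k) (Finset.Ioi k) := disjoint_left.mpr fun i hi hi' =>
    (Finset.mem_Iio.mp hi).not_gt (Finset.mem_Ioi.mp hi')
  have hpos_below : 0 < ∏ i ∈ Finset.Iio k, (c k - c i) :=
    prod_pos fun i hi => sub_pos.mpr (hc (Finset.mem_Iio.mp hi))
  have hpos_above : 0 < ∏ i ∈ Finset.Ioi k, (c i - c k) :=
    prod_pos fun i hi => sub_pos.mpr (hc (Finset.mem_Ioi.mp hi))
  rw [det_diagAddRankOne_sub_smul_one_self, hsplit, prod_union hdisj, hbelow]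
  calc 0 < q * w k * (∏ i ∈ Finset.Iio k, (c k - c i)) * ∏ i ∈ Finset.Ioi k, (c i - c k) :=
        mul_pos (mul_pos (mul_pos hq (hw k)) hpos_below) hpos_above
    _ = _ := by
        have hsq : ((-1 : ℝ) ^ (k : ℕ)) * (-1) ^ (k : ℕ) = 1 := by rw [← mul_pow]; norm_num
        linear_combination (-(q * w k * (∏ i ∈ Finset.Iio k, (c k - c i)) *
          ∏ i ∈ Finset.Ioi k, (c i - c k))) * hsq

theorem exists_det_diagAddRankOne_sub_smul_one_eq_zero (hq : 0 < q) (hw : ∀ i, 0 < w i)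
    (hsum : ∑ i, w i = 1) (hc : StrictMono c) (k : Fin d) :
    ∃ θ ∈ interlacingInterval c k, (diagAddRankOne q c w - θ • 1).det = 0 := by
  have hcont : Continuous fun θ : ℝ => (diagAddRankOne q c w - θ • 1).det := by
    unfold diagAddRankOne
    fun_prop
  have hpole := neg_one_pow_mul_det_diagAddRankOne_sub_smul_one_self_pos hq hw hc
  by_cases h : (k : ℕ) + 1 < d
  · rw [interlacingInterval_of_lt h]
    exact exists_mem_Ioo_eq_zero_of_alternating_sign hcont
      (hc (Fin.lt_def.mpr (Nat.lt_add_one _))) k (hpole k) (hpole ⟨k + 1, h⟩)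
  · have hR : ∀ i, c i + q < c k + q + 1 := fun i =>
      by linarith [hc.monotone (Fin.le_def.mpr (by omega : (i : ℕ) ≤ k))]
    have hcard : Fintype.card (Fin d) = k + 1 := by simp only [Fintype.card_fin]; omega
    have : Nonempty (Fin d) := ⟨k⟩
    have hlarge := det_smul_one_sub_diagAddRankOne_pos hq hw hsum hR
    rw [← neg_one_pow_card_mul_det_sub_smul_one, hcard] at hlarge
    obtain ⟨θ, hθ, hzero⟩ :=
      exists_mem_Ioo_eq_zero_of_alternating_sign hcont (by linarith) k (hpole k) hlarge
    exact ⟨θ, by rw [interlacingInterval_of_le (by omega)]; exact hθ.1, hzero⟩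

theorem det_diagAddRankOne_sub_smul_one_interlace (hq : 0 < q) (hw : ∀ i, 0 < w i)
    (hsum : ∑ i, w i = 1) (hc : StrictMono c) :
    (∀ k, ∃! θ, θ ∈ interlacingInterval c k ∧ (diagAddRankOne q c w - θ • 1).det = 0) ∧
      ∀ θ, (diagAddRankOne q c w - θ • 1).det = 0 → ∃ k, θ ∈ interlacingInterval c k :=
  existsUnique_of_pairwise_disjoint_of_card_le
    (fun θ h => Multiset.mem_toFinset.mpr ((det_sub_smul_one_eq_zero_iff _ θ).mp h))
    ((Multiset.toFinset_card_le _).trans ((Polynomial.card_roots' _).trans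
      (charpoly_natDegree_eq_dim _).le))
    (pairwise_disjoint_interlacingInterval hc.monotone)
    (exists_det_diagAddRankOne_sub_smul_one_eq_zero hq hw hsum hc)

end Interlacing

end Matrix

/-- The matrix `M = q e pᵀ − q I + diag(φ₁,…,φ_d)` (pairwise distinct `φ i`,
`p i > 0` summing to one, `q > 0`) has exactly `d` distinct real eigenvalues:
writing the values `φ i − q` in increasing order as `c₁ < … < c_d` (via a
permutation `e`), there is exactly one eigenvalue in each interval
`(c i, c (i+1))`, exactly one in `(c_d, ∞)`, and every eigenvalue lies strictly
above `c₁` and differs from every `c i`. -/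
theorem real_eigenvalues_interlace
    (d : ℕ) (hd : 1 ≤ d) (q : ℝ) (hq : 0 < q) (φ p : Fin d → ℝ)
    (hp : ∀ i, 0 < p i) (hsum : ∑ i, p i = 1)
    (e : Equiv.Perm (Fin d)) (hmono : StrictMono fun i => φ (e i) - q) :
    (∀ i : Fin d, ∀ h : i.val + 1 < d,
      ∃! θ : ℝ, θ ∈ Set.Ioo (φ (e i) - q) (φ (e ⟨i.val + 1, h⟩) - q) ∧
        Matrix.det
          ((Matrix.of fun i j : Fin d => if i = j then q * p i - q + φ i else q * p j)
            - θ • (1 : Matrix (Fin d) (Fin d) ℝ)) = 0) ∧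
    (∃! θ : ℝ, θ ∈ Set.Ioi (φ (e ⟨d - 1, by omega⟩) - q) ∧
        Matrix.det
          ((Matrix.of fun i j : Fin d => if i = j then q * p i - q + φ i else q * p j)
            - θ • (1 : Matrix (Fin d) (Fin d) ℝ)) = 0) ∧
    (∀ θ : ℝ,
        Matrix.det
          ((Matrix.of fun i j : Fin d => if i = j then q * p i - q + φ i else q * p j)
            - θ • (1 : Matrix (Fin d) (Fin d) ℝ)) = 0 →
        φ (e ⟨0, by omega⟩) - q < θ ∧ ∀ i, θ ≠ φ i - q) := by
  have hdet : ∀ θ : ℝ,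
      ((of fun i j : Fin d => if i = j then q * p i - q + φ i else q * p j) - θ • 1).det =
        (diagAddRankOne q (fun i => φ (e i) - q) (fun i => p (e i)) - θ • 1).det := fun θ => by
    rw [← det_submatrix_equiv_self e, ← submatrix_equiv_eq_diagAddRankOne]
    congr 1
    ext i j
    simp [one_apply]
  have hw : ∀ i, 0 < p (e i) := fun i => hp (e i)
  obtain ⟨hunique, hcover⟩ :=
    det_diagAddRankOne_sub_smul_one_interlace hq hw ((Equiv.sum_comp e p).trans hsum) hmono
  simp only [hdet]
  refine ⟨fun i h => ?_, ?_, fun θ hθ => ⟨?_, fun i => ?_⟩⟩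
  · simpa only [interlacingInterval_of_lt h] using hunique i
  · have hlast : d ≤ ((⟨d - 1, by omega⟩ : Fin d) : ℕ) + 1 := by dsimp only; omega
    simpa only [interlacingInterval_of_le hlast] using hunique ⟨d - 1, by omega⟩
  · obtain ⟨k, hk⟩ := hcover θ hθ
    exact (hmono.monotone (Fin.le_def.mpr (Nat.zero_le k))).trans_lt hk.1
  · rintro rfl
    have hpole := neg_one_pow_mul_det_diagAddRankOne_sub_smul_one_self_pos hq hw hmono (e.symm i)
    simp only [Equiv.apply_symm_apply, hθ, mul_zero, lt_self_iff_false] at hpole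
end

section
/- Let φ₁, φ₂ : ℝ → ℝ be convex functions with φ₁(0) = φ₂(0) = 0 that are differentiable at 0, let p₁, p₂ > 0 with p₁ + p₂ = 1, let q > 0, and assume κ := p₁φ₁′(0) + p₂φ₂′(0) > 0. If α* > 0 satisfies φ₁(α*)·φ₂(α*) = q(p₁φ₁(α*) + p₂φ₂(α*)), then φ₁(α*) > 0 and φ₂(α*) > 0. -/
/-- Positivity of the Laplace exponents at the positive root `α*` of
`det M(α) = φ₁(α)φ₂(α) − q(p₁φ₁(α) + p₂φ₂(α)) = 0`: if `φ₁, φ₂` are convex,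
vanish at `0`, are differentiable at `0`, and the net profit condition
`κ = p₁φ₁′(0) + p₂φ₂′(0) > 0` holds, then `φ₁(α*) > 0` and `φ₂(α*) > 0`. -/
theorem laplace_exponents_pos_at_root
    (φ₁ φ₂ : ℝ → ℝ) (hconv₁ : ConvexOn ℝ Set.univ φ₁) (hconv₂ : ConvexOn ℝ Set.univ φ₂)
    (h₁0 : φ₁ 0 = 0) (h₂0 : φ₂ 0 = 0)
    (hd₁ : DifferentiableAt ℝ φ₁ 0) (hd₂ : DifferentiableAt ℝ φ₂ 0)
    (p₁ p₂ : ℝ) (hp₁ : 0 < p₁) (hp₂ : 0 < p₂) (hp : p₁ + p₂ = 1)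
    (q : ℝ) (hq : 0 < q)
    (hκ : 0 < p₁ * deriv φ₁ 0 + p₂ * deriv φ₂ 0)
    (α' : ℝ) (hα' : 0 < α')
    (hroot : φ₁ α' * φ₂ α' = q * (p₁ * φ₁ α' + p₂ * φ₂ α')) :
    0 < φ₁ α' ∧ 0 < φ₂ α' := by
  have hs₁ : deriv φ₁ 0 ≤ φ₁ α' / α' := by
    have := hconv₁.deriv_le_slope (Set.mem_univ 0) (Set.mem_univ α') hα' hd₁
    simpa [slope, h₁0, div_eq_inv_mul] using this
  have hs₂ : deriv φ₂ 0 ≤ φ₂ α' / α' := by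
    have := hconv₂.deriv_le_slope (Set.mem_univ 0) (Set.mem_univ α') hα' hd₂
    simpa [slope, h₂0, div_eq_inv_mul] using this
  have hs : 0 < p₁ * φ₁ α' + p₂ * φ₂ α' := by
    have h1 : p₁ * deriv φ₁ 0 ≤ p₁ * (φ₁ α' / α') := by nlinarith
    have h2 : p₂ * deriv φ₂ 0 ≤ p₂ * (φ₂ α' / α') := by nlinarith
    have : 0 < p₁ * (φ₁ α' / α') + p₂ * (φ₂ α' / α') := by linarith
    have := mul_pos this hα'
    field_simp at this
    nlinarith
  have hab : 0 < φ₁ α' * φ₂ α' := by rw [hroot]; positivity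
  rcases mul_pos_iff.mp hab with ⟨h1, h2⟩ | ⟨h1, h2⟩
  · exact ⟨h1, h2⟩
  · nlinarith
end
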